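/- If the π-join M₁(A) of a DSRG with parameters (n,k,t,λ,μ) and homogeneous partition with a cells of size b (ab = n) is a DSRG, then 2k + μ − λ = aμ + b. -/

import Mathlib

open Matrix

/-- The all-ones matrix. -/
def onesMat (n : ℕ) : Matrix (Fin n) (Fin n) ℝ := Matrix.of fun _ _ => 1

/-- The all-ones matrix indexed by blocks. -/
def Jbig (N n : ℕ) : Matrix (Fin N × Fin n) (Fin N × Fin n) ℝ := Matrix.of fun _ _ => 1

/-- `Ublk a b i`: columns in the `i`-th cell are all-ones, other entries zero. -/
def Ublk (a b : ℕ) (i : ℕ) : Matrix (Fin (a * b)) (Fin (a * b)) ℝ :=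
  Matrix.of fun _ c => if (c : ℕ) / b = i then 1 else 0

/-- The π-join of `A` in power `j`: the block-circulant matrix of block order
`j*a+1` whose first block-row is `(A, U₁,…,U₁, U₂,…,U₂, …, U_a,…,U_a)`,
each `Uᵢ` repeated `j` times. -/
def Mjoin (a b j : ℕ) (A : Matrix (Fin (a * b)) (Fin (a * b)) ℝ) :
    Matrix (Fin (j * a + 1) × Fin (a * b)) (Fin (j * a + 1) × Fin (a * b)) ℝ :=
  fun p q =>
    if q.1 - p.1 = 0 then A p.2 q.2
    else Ublk a b ((((q.1 - p.1 : Fin (j * a + 1)) : ℕ) - 1) / j) p.2 q.2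


/-!
The diagonal blocks of `M₁(A)²` are `A² + bJ`: the block products through the other block rows
are `Uᵢ * U_{a-1-i} = b • U_{a-1-i}`, and the `Uᵢ` add up to `J`. Comparing these blocks entrywise
at a diagonal entry, an arc and a non-arc of `A` (both exist because `t < k`) gives
`t̃ = t + b`, `λ̃ = λ + b`, `μ̃ = μ + b`. Multiplying the defining equation by `J` yields
`k² = t + λk + μ(n - 1 - k)` for `A` and for `M₁(A)`, whose valency is `k + ab`; the difference of
the two identities is `ab(2k + μ - λ) = ab(aμ + b)`.
-/

section DSRG

variable {ι : Type*} [Fintype ι] {A : Matrix ι ι ℝ} {k t l m : ℝ}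

lemma dsrg_param_eq [DecidableEq ι] [Nonempty ι]
    (hAJ : A * of (fun _ _ => 1) = k • of (fun _ _ => 1))
    (hA2 : A * A = t • 1 + l • A + m • (of (fun _ _ => 1) - 1 - A)) :
    k * k = t + l * k + m * (Fintype.card ι - 1 - k) := by
  set J : Matrix ι ι ℝ := of fun _ _ => 1
  have hJJ : J * J = (Fintype.card ι : ℝ) • J := by ext; simp [J, mul_apply]
  have h : (k * k) • J = (t + l * k + m * (Fintype.card ι - 1 - k)) • J := by
    calc (k * k) • J = A * A * J := by rw [Matrix.mul_assoc, hAJ, Matrix.mul_smul, hAJ, smul_smul]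
      _ = _ := by
        rw [hA2]
        simp only [Matrix.add_mul, Matrix.sub_mul, smul_mul, Matrix.one_mul, hAJ, hJJ]
        module
  obtain ⟨i⟩ := ‹Nonempty ι›
  simpa [J] using congrFun (congrFun h i) i

lemma mul_self_apply_self_of_eq_zero [DecidableEq ι]
    (hA2 : A * A = t • 1 + l • A + m • (of (fun _ _ => 1) - 1 - A)) {i : ι} (hi : A i i = 0) :
    (A * A) i i = t := by
  simp [hA2, hi]

lemma mul_self_apply_of_eq_one [DecidableEq ι]
    (hA2 : A * A = t • 1 + l • A + m • (of (fun _ _ => 1) - 1 - A)) {i j : ι} (hij : i ≠ j)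
    (h : A i j = 1) : (A * A) i j = l := by
  simp [hA2, h, hij]

lemma mul_self_apply_of_eq_zero [DecidableEq ι]
    (hA2 : A * A = t • 1 + l • A + m • (of (fun _ _ => 1) - 1 - A)) {i j : ι} (hij : i ≠ j)
    (h : A i j = 0) : (A * A) i j = m := by
  simp [hA2, h, hij]

lemma exists_eq_one_and_eq_zero (h01 : ∀ i j, A i j = 0 ∨ A i j = 1) {i : ι}
    (hrow : ∑ j, A i j = k) (hsq : (A * A) i i = t) (htk : t < k) :
    ∃ j, A i j = 1 ∧ A j i = 0 := by
  by_contra! hcon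
  have hsame : ∀ j, A i j * A j i = A i j := by
    intro j
    rcases h01 i j with h | h
    · simp [h]
    · rcases h01 j i with h' | h'
      · exact absurd h' (hcon j h)
      · simp [h, h']
  rw [mul_apply, Finset.sum_congr rfl fun j _ => hsame j, hrow] at hsq
  linarith

end DSRG

lemma finProdFinEquiv_val_div {a b : ℕ} (x : Fin a) (y : Fin b) :
    (finProdFinEquiv (x, y) : ℕ) / b = x := by
  rw [finProdFinEquiv_apply_val, Nat.add_mul_div_left _ _ y.pos, Nat.div_eq_of_lt y.isLt,
    zero_add]

lemma Ublk_row_sum {a b i : ℕ} (hi : i < a) (r : Fin (a * b)) :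
    ∑ c, Ublk a b i r c = b := by
  rw [← finProdFinEquiv.sum_comp, Fintype.sum_prod_type,
    Fintype.sum_eq_single ⟨i, hi⟩ fun x hx => ?_] <;>
  simp only [Ublk, of_apply, finProdFinEquiv_val_div]
  · simp
  · simp [Fin.ext_iff.not.mp hx]

lemma Ublk_mul {a b i : ℕ} (hi : i < a) (i' : ℕ) :
    Ublk a b i * Ublk a b i' = (b : ℝ) • Ublk a b i' := by
  ext r c
  rw [mul_apply, Matrix.smul_apply, smul_eq_mul, ← Ublk_row_sum hi r, Finset.sum_mul]
  simp [Ublk]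

lemma sum_range_Ublk (a b : ℕ) : ∑ i ∈ Finset.range a, Ublk a b i = onesMat (a * b) := by
  ext r c
  have hc : (c : ℕ) / b < a := Nat.div_lt_of_lt_mul (lt_of_lt_of_eq c.isLt (mul_comm a b))
  rw [Matrix.sum_apply, Finset.sum_eq_single_of_mem _ (Finset.mem_range.mpr hc) fun i _ hi => ?_]
  · simp [Ublk, onesMat]
  · simp [Ublk, Ne.symm hi]

lemma Mjoin_apply_self (a b j : ℕ) (A : Matrix (Fin (a * b)) (Fin (a * b)) ℝ)
    (x : Fin (j * a + 1)) (u w : Fin (a * b)) : Mjoin a b j A (x, u) (x, w) = A u w := by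
  simp [Mjoin]

lemma Mjoin_apply_add_succ (a b j : ℕ) (A : Matrix (Fin (a * b)) (Fin (a * b)) ℝ)
    (x : Fin (j * a + 1)) (i : Fin (j * a)) (u w : Fin (a * b)) :
    Mjoin a b j A (x, u) (i.succ + x, w) = Ublk a b (i / j) u w := by
  simp [Mjoin, Fin.succ_ne_zero]

lemma Mjoin_mul_Jbig {a b j : ℕ} {k : ℝ} {A : Matrix (Fin (a * b)) (Fin (a * b)) ℝ}
    (hAJ : A * onesMat (a * b) = k • onesMat (a * b)) :
    Mjoin a b j A * Jbig (j * a + 1) (a * b) = (k + j * a * b) • Jbig (j * a + 1) (a * b) := by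
  ext ⟨x, u⟩ q
  have hrow : ∑ w, A u w = k := by simpa [mul_apply, onesMat] using congrFun (congrFun hAJ u) u
  simp only [mul_apply, Jbig, of_apply, mul_one, Matrix.smul_apply, smul_eq_mul]
  rw [Fintype.sum_prod_type, ← Equiv.sum_comp (Equiv.addRight x), Fin.sum_univ_succ]
  simp only [Equiv.coe_addRight, zero_add, Mjoin_apply_self, hrow, Mjoin_apply_add_succ]
  rw [Finset.sum_congr rfl fun (i : Fin (j * a)) _ =>
    Ublk_row_sum (Nat.div_lt_of_lt_mul i.isLt) u]
  simp

lemma Mjoin_one_apply_succ_zero (a b : ℕ) (A : Matrix (Fin (a * b)) (Fin (a * b)) ℝ)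
    (i : Fin (1 * a)) (w v : Fin (a * b)) :
    Mjoin a b 1 A (i.succ, w) (0, v) = Ublk a b i.rev w v := by
  have hne : (0 : Fin (1 * a + 1)) - i.succ ≠ 0 := by simp
  have hval : ((0 - i.succ : Fin (1 * a + 1)) : ℕ) - 1 = i.rev := by
    rw [Fin.sub_def, Fin.val_rev]
    simp only [Fin.val_zero, Fin.val_succ]
    rw [Nat.mod_eq_of_lt (by omega)]
    omega
  simp only [Mjoin, if_neg hne, hval, Nat.div_one]

lemma Mjoin_one_mul_self_apply_zero (a b : ℕ) (A : Matrix (Fin (a * b)) (Fin (a * b)) ℝ)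
    (u v : Fin (a * b)) :
    (Mjoin a b 1 A * Mjoin a b 1 A) (0, u) (0, v) = (A * A) u v + b := by
  have hcross : ∀ i : Fin (1 * a),
      ∑ w, Mjoin a b 1 A (0, u) (i.succ, w) * Mjoin a b 1 A (i.succ, w) (0, v)
        = b * Ublk a b i.rev u v := by
    intro i
    have hi : (i : ℕ) < a := by simpa using i.isLt
    have hrow : ∀ w, Mjoin a b 1 A (0, u) (i.succ, w) = Ublk a b i u w := by
      simpa using Mjoin_apply_add_succ a b 1 A 0 i u
    simpa [hrow, Mjoin_one_apply_succ_zero, mul_apply] using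
      congrFun (congrFun (Ublk_mul (b := b) hi i.rev) u) v
  rw [mul_apply, mul_apply, Fintype.sum_prod_type, Fin.sum_univ_succ]
  simp only [Mjoin_apply_self, hcross, ← Finset.mul_sum]
  have hrev : ∑ i : Fin (1 * a), Ublk a b i.rev u v = ∑ i : Fin (1 * a), Ublk a b i u v :=
    Equiv.sum_comp Fin.revPerm (fun i => Ublk a b i u v)
  rw [hrev, Fin.sum_univ_eq_sum_range (fun i => Ublk a b i u v), one_mul, ← Matrix.sum_apply,
    sum_range_Ublk]
  simp [onesMat]

theorem pijoin_eq1_general (a b k t l m : ℕ) (ha : 0 < a) (hb : 0 < b)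
    (A : Matrix (Fin (a * b)) (Fin (a * b)) ℝ)
    (h01 : ∀ i j, A i j = 0 ∨ A i j = 1)
    (hdiag : ∀ i, A i i = 0)
    (hAJ : A * onesMat (a * b) = (k : ℝ) • onesMat (a * b))
    (hA2 : A * A = (t : ℝ) • (1 : Matrix (Fin (a * b)) (Fin (a * b)) ℝ) + (l : ℝ) • A
            + (m : ℝ) • (onesMat (a * b) - 1 - A))
    (htk : t < k)
    (ttil ltil mtil : ℕ)
    (hM2 : Mjoin a b 1 A * Mjoin a b 1 A
            = (ttil : ℝ) • (1 : Matrix (Fin (1 * a + 1) × Fin (a * b))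
                (Fin (1 * a + 1) × Fin (a * b)) ℝ)
              + (ltil : ℝ) • Mjoin a b 1 A
              + (mtil : ℝ) • (Jbig (1 * a + 1) (a * b) - 1 - Mjoin a b 1 A)) :
    2 * (k : ℝ) + (m : ℝ) - (l : ℝ) = (a : ℝ) * (m : ℝ) + (b : ℝ) := by
  have hab : 0 < a * b := Nat.mul_pos ha hb
  have : Nonempty (Fin (a * b)) := ⟨⟨0, hab⟩⟩
  let i : Fin (a * b) := ⟨0, hab⟩
  have hrow : ∑ j, A i j = k := by simpa [mul_apply, onesMat] using congrFun (congrFun hAJ i) i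
  obtain ⟨w, hiw, hwi⟩ := exists_eq_one_and_eq_zero h01 hrow
    (mul_self_apply_self_of_eq_zero hA2 (hdiag i)) (by exact_mod_cast htk)
  have hne : i ≠ w := by rintro rfl; simp [hdiag] at hiw
  have hne' : ((0, i) : Fin (1 * a + 1) × Fin (a * b)) ≠ (0, w) := by simpa using hne
  have hsq := Mjoin_one_mul_self_apply_zero a b A
  have ht : (ttil : ℝ) = t + b := by
    rw [← mul_self_apply_self_of_eq_zero hM2 (Mjoin_apply_self a b 1 A 0 i i |>.trans (hdiag i)),
      hsq, mul_self_apply_self_of_eq_zero hA2 (hdiag i)]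
  have hl : (ltil : ℝ) = l + b := by
    rw [← mul_self_apply_of_eq_one hM2 hne' (Mjoin_apply_self a b 1 A 0 i w |>.trans hiw),
      hsq, mul_self_apply_of_eq_one hA2 hne hiw]
  have hm : (mtil : ℝ) = m + b := by
    rw [← mul_self_apply_of_eq_zero hM2 hne'.symm (Mjoin_apply_self a b 1 A 0 w i |>.trans hwi),
      hsq, mul_self_apply_of_eq_zero hA2 hne.symm hwi]
  have hA := dsrg_param_eq hAJ hA2
  have hM := dsrg_param_eq (Mjoin_mul_Jbig hAJ) hM2
  simp only [ht, hl, hm, Fintype.card_prod, Fintype.card_fin, Nat.cast_mul, Nat.cast_add,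
    Nat.cast_one] at hA hM
  have hab' : (a : ℝ) * b ≠ 0 := by positivity
  apply mul_left_cancel₀ hab'
  linear_combination hM - hA

/-- Corollary 1: if the π-join `M₁(A)` of a DSRG is a DSRG, then
`2k + μ − λ = aμ + b`. -/
theorem pijoin_eq1 (a b k t l m : ℕ) (ha : 0 < a) (hb : 0 < b)
    (A : Matrix (Fin (a * b)) (Fin (a * b)) ℝ)
    (h01 : ∀ i j, A i j = 0 ∨ A i j = 1)
    (hdiag : ∀ i, A i i = 0)
    (hAJ : A * onesMat (a * b) = (k : ℝ) • onesMat (a * b))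
    (hJA : onesMat (a * b) * A = (k : ℝ) • onesMat (a * b))
    (hA2 : A * A = (t : ℝ) • (1 : Matrix (Fin (a * b)) (Fin (a * b)) ℝ) + (l : ℝ) • A
            + (m : ℝ) • (onesMat (a * b) - 1 - A))
    (hlt : l < t) (htk : t < k) (hm0 : 0 < m) (hmt : m ≤ t)
    (ntil ktil ttil ltil mtil : ℕ)
    (hcard : ntil = Fintype.card (Fin (1 * a + 1) × Fin (a * b)))
    (hMJ : Mjoin a b 1 A * Jbig (1 * a + 1) (a * b)
            = (ktil : ℝ) • Jbig (1 * a + 1) (a * b))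
    (hJM : Jbig (1 * a + 1) (a * b) * Mjoin a b 1 A
            = (ktil : ℝ) • Jbig (1 * a + 1) (a * b))
    (hM2 : Mjoin a b 1 A * Mjoin a b 1 A
            = (ttil : ℝ) • (1 : Matrix (Fin (1 * a + 1) × Fin (a * b))
                (Fin (1 * a + 1) × Fin (a * b)) ℝ)
              + (ltil : ℝ) • Mjoin a b 1 A
              + (mtil : ℝ) • (Jbig (1 * a + 1) (a * b) - 1 - Mjoin a b 1 A))
    (hlttil : ltil < ttil) (htktil : ttil < ktil) (hm0til : 0 < mtil) (hmttil : mtil ≤ ttil) :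
    2 * (k : ℝ) + (m : ℝ) - (l : ℝ) = (a : ℝ) * (m : ℝ) + (b : ℝ) :=
  pijoin_eq1_general a b k t l m ha hb A h01 hdiag hAJ hA2 htk ttil ltil mtil hM2
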